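/- arXiv:1508.04503 — 4 statements merged into one kernel-verified Lean document; each statement's English description precedes it below -/
import Mathlib

section
/- Let (M,g) be a Riemannian manifold with orthogonal splitting TM = F ⊕ F₁ ⊕ F₂ into subbundles, where F is integrable. Suppose that for all X ∈ Γ(F) and sections U_i, V_i ∈ Γ(F_i) (i=1,2) one has X⟨U_i,V_i⟩ = ⟨[X,U_i],V_i⟩ + ⟨U_i,[X,V_i]⟩ and ⟨[X,U₂],U₁⟩ = 0. Then for the Levi-Civita connection ∇ of g and any X ∈ Γ(F), U_i, V_i ∈ Γ(F_i): ⟨X, ∇_{U_i}V_i + ∇_{V_i}U_i⟩ = 0 and ⟨∇_X U₂, U₁⟩ + ⟨X, ∇_{U₂}U₁⟩ = 0. -/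
private lemma half_cancel {C : Type*} [AddCommGroup C] [Module ℝ C] {c : C}
    (h : (2 : ℝ) • c = 0) : c = 0 := by
  rcases smul_eq_zero.mp h with h' | h'
  · norm_num at h'
  · exact h'

/-- Connes' infinitesimal almost-isometry identities for the Levi-Civita connection.
We model `Γ(TM)` as a real Lie algebra `L` (vector fields), `C^∞(M)` as a real vector
space `C`, the metric as a symmetric bilinear map `g : L → L → C`, directional
derivative of functions as `D : L → C →ₗ C`, and the Levi-Civita connection of `g` as a
map `∇ : L → L → L` characterized by the Koszul formula.  `F, F₁, F₂` are the (mutually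
`g`-orthogonal, jointly spanning) submodules of sections of the three subbundles, with
`F` integrable.  Under the almost isometric conditions, for `X ∈ Γ(F)`,
`U_i, V_i ∈ Γ(F_i)`:  `⟨X, ∇_{U_i}V_i + ∇_{V_i}U_i⟩ = 0` (i = 1, 2) and
`⟨∇_X U₂, U₁⟩ + ⟨X, ∇_{U₂}U₁⟩ = 0`. -/
theorem almost_isometric_levi_civita_identities
    {L C : Type*} [LieRing L] [LieAlgebra ℝ L] [AddCommGroup C] [Module ℝ C]
    (g : L →ₗ[ℝ] L →ₗ[ℝ] C) (hgsymm : ∀ X Y, g X Y = g Y X)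
    (D : L → C →ₗ[ℝ] C)
    (nabla : L → L → L)
    (hKoszul : ∀ X Y Z : L, (2 : ℝ) • g (nabla X Y) Z =
      D X (g Y Z) + D Y (g X Z) - D Z (g X Y)
        + g ⁅X, Y⁆ Z - g ⁅X, Z⁆ Y - g ⁅Y, Z⁆ X)
    (F F1 F2 : Submodule ℝ L)
    (hsum : F ⊔ F1 ⊔ F2 = ⊤)
    (hFint : ∀ X ∈ F, ∀ Y ∈ F, ⁅X, Y⁆ ∈ F)
    (horthF1 : ∀ X ∈ F, ∀ U ∈ F1, g X U = 0)
    (horthF2 : ∀ X ∈ F, ∀ U ∈ F2, g X U = 0)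
    (horth12 : ∀ U ∈ F1, ∀ V ∈ F2, g U V = 0)
    (hAI1 : ∀ X ∈ F, ∀ U ∈ F1, ∀ V ∈ F1,
      D X (g U V) = g ⁅X, U⁆ V + g U ⁅X, V⁆)
    (hAI2 : ∀ X ∈ F, ∀ U ∈ F2, ∀ V ∈ F2,
      D X (g U V) = g ⁅X, U⁆ V + g U ⁅X, V⁆)
    (hAI12 : ∀ X ∈ F, ∀ U₂ ∈ F2, ∀ U₁ ∈ F1, g ⁅X, U₂⁆ U₁ = 0) :
    (∀ X ∈ F, ∀ U ∈ F1, ∀ V ∈ F1, g X (nabla U V + nabla V U) = 0) ∧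
    (∀ X ∈ F, ∀ U ∈ F2, ∀ V ∈ F2, g X (nabla U V + nabla V U) = 0) ∧
    (∀ X ∈ F, ∀ U₂ ∈ F2, ∀ U₁ ∈ F1,
      g (nabla X U₂) U₁ + g X (nabla U₂ U₁) = 0) := by
  have main : ∀ (F' : Submodule ℝ L),
      (∀ X ∈ F, ∀ U ∈ F', g X U = 0) →
      (∀ X ∈ F, ∀ U ∈ F', ∀ V ∈ F', D X (g U V) = g ⁅X, U⁆ V + g U ⁅X, V⁆) →
      ∀ X ∈ F, ∀ U ∈ F', ∀ V ∈ F', g X (nabla U V + nabla V U) = 0 := by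
    intro F' horth hAI X hX U hU V hV
    apply half_cancel
    have h1 := hKoszul U V X
    have h2 := hKoszul V U X
    have e1 : g V X = 0 := by rw [hgsymm]; exact horth X hX V hV
    have e2 : g U X = 0 := by rw [hgsymm]; exact horth X hX U hU
    have e3 : D X (g U V) = g ⁅X, U⁆ V + g ⁅X, V⁆ U := by
      rw [hAI X hX U hU V hV, hgsymm U]
    have e4 : D X (g V U) = g ⁅X, U⁆ V + g ⁅X, V⁆ U := by
      rw [hgsymm V U]; exact e3
    have s1 : (⁅U, X⁆ : L) = -⁅X, U⁆ := (lie_skew U X).symm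
    have s2 : (⁅V, X⁆ : L) = -⁅X, V⁆ := (lie_skew V X).symm
    have s3 : (⁅V, U⁆ : L) = -⁅U, V⁆ := (lie_skew V U).symm
    rw [map_add, smul_add, hgsymm X (nabla U V), hgsymm X (nabla V U), h1, h2,
      e1, e2, e3, e4, s1, s2, s3, map_neg, map_neg, map_neg, map_zero, map_zero]
    simp only [LinearMap.neg_apply]
    abel
  refine ⟨main F1 horthF1 hAI1, main F2 horthF2 hAI2, ?_⟩
  intro X hX U₂ hU₂ U₁ hU₁
  apply half_cancel
  have h1 := hKoszul X U₂ U₁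
  have h2 := hKoszul U₂ U₁ X
  have e1 : g U₂ U₁ = 0 := by rw [hgsymm]; exact horth12 U₁ hU₁ U₂ hU₂
  have e2 : g X U₁ = 0 := horthF1 X hX U₁ hU₁
  have e3 : g X U₂ = 0 := horthF2 X hX U₂ hU₂
  have e4 : g U₁ X = 0 := by rw [hgsymm]; exact e2
  have e5 : g ⁅X, U₂⁆ U₁ = 0 := hAI12 X hX U₂ hU₂ U₁ hU₁
  have s1 : (⁅U₂, X⁆ : L) = -⁅X, U₂⁆ := (lie_skew U₂ X).symm
  have s2 : (⁅U₁, X⁆ : L) = -⁅X, U₁⁆ := (lie_skew U₁ X).symm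
  rw [smul_add, h1, hgsymm X (nabla U₂ U₁), h2,
    e1, e2, e3, e4, e5, s1, s2, map_neg, map_neg, map_zero, map_zero, map_zero]
  simp only [LinearMap.neg_apply, map_neg]
  have e6 : g U₂ X = 0 := by rw [hgsymm]; exact e3
  abel_nf
  simp [e5, e6]
end

section
/- Let (M,g) be a Riemannian manifold with orthogonal splitting TM = F ⊕ F₁ ⊕ F₂ satisfying the almost isometric conditions (for X ∈ Γ(F), U_i, V_i ∈ Γ(F_i): X⟨U_i,V_i⟩ = ⟨[X,U_i],V_i⟩ + ⟨U_i,[X,V_i]⟩ and ⟨[X,U₂],U₁⟩ = 0), with F integrable. For β, ε > 0, let g_{β,ε} = β²g|_F ⊕ ε^{-2}g|_{F₁} ⊕ g|_{F₂} and let ∇^{β,ε} be its Levi-Civita connection. Then for X ∈ Γ(F) and U₁, V₁ ∈ Γ(F₁): ⟨∇^{β,ε}_{U₁}V₁, X⟩ = (1/2)⟨[U₁,V₁], X⟩, where the inner product on the left is the one induced by g (computed via g-duality after projecting to F). -/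
/-- In the Connes almost-isometric setting, for the rescaled metric
`g_{β,ε} = β²g|_F ⊕ ε⁻²g|_{F₁} ⊕ g|_{F₂}` with Levi-Civita connection `∇^{β,ε}`
(characterized by the Koszul formula for `g_{β,ε}`), one has for `X ∈ Γ(F)` and
`U₁, V₁ ∈ Γ(F₁)`:  `⟨∇^{β,ε}_{U₁}V₁, X⟩ = (1/2)⟨[U₁,V₁], X⟩`, where the inner products
are the ones induced by `g`.  We model `Γ(TM)` as a real Lie algebra `L`, functions as
`C`, the metric as a symmetric bilinear map `g`, directional derivatives as `D`, and
`pF, p1, p2` are the projections onto the three orthogonal summands. -/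
theorem rescaled_connection_F_component
    {L C : Type*} [LieRing L] [LieAlgebra ℝ L] [AddCommGroup C] [Module ℝ C]
    (g : L →ₗ[ℝ] L →ₗ[ℝ] C) (hgsymm : ∀ X Y, g X Y = g Y X)
    (D : L → C →ₗ[ℝ] C)
    (F F1 F2 : Submodule ℝ L)
    (hsum : F ⊔ F1 ⊔ F2 = ⊤)
    (hFint : ∀ X ∈ F, ∀ Y ∈ F, ⁅X, Y⁆ ∈ F)
    (horthF1 : ∀ X ∈ F, ∀ U ∈ F1, g X U = 0)
    (horthF2 : ∀ X ∈ F, ∀ U ∈ F2, g X U = 0)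
    (horth12 : ∀ U ∈ F1, ∀ V ∈ F2, g U V = 0)
    (hAI1 : ∀ X ∈ F, ∀ U ∈ F1, ∀ V ∈ F1,
      D X (g U V) = g ⁅X, U⁆ V + g U ⁅X, V⁆)
    (hAI2 : ∀ X ∈ F, ∀ U ∈ F2, ∀ V ∈ F2,
      D X (g U V) = g ⁅X, U⁆ V + g U ⁅X, V⁆)
    (hAI12 : ∀ X ∈ F, ∀ U₂ ∈ F2, ∀ U₁ ∈ F1, g ⁅X, U₂⁆ U₁ = 0)
    -- the three projections associated to the splitting `TM = F ⊕ F₁ ⊕ F₂`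
    (pF p1 p2 : L →ₗ[ℝ] L)
    (hdecomp : ∀ v : L, pF v + p1 v + p2 v = v)
    (hrange : ∀ v : L, pF v ∈ F ∧ p1 v ∈ F1 ∧ p2 v ∈ F2)
    (hpF : (∀ x ∈ F, pF x = x) ∧ (∀ x ∈ F1, pF x = 0) ∧ (∀ x ∈ F2, pF x = 0))
    (hp1 : (∀ x ∈ F, p1 x = 0) ∧ (∀ x ∈ F1, p1 x = x) ∧ (∀ x ∈ F2, p1 x = 0))
    (hp2 : (∀ x ∈ F, p2 x = 0) ∧ (∀ x ∈ F1, p2 x = 0) ∧ (∀ x ∈ F2, p2 x = x))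
    (β ε : ℝ) (hβ : 0 < β) (hε : 0 < ε)
    -- the rescaled metric g_{β,ε}
    (gβε : L → L → C)
    (hgβε : ∀ u v : L, gβε u v =
      (β ^ 2) • g (pF u) (pF v) + ((ε ^ 2)⁻¹) • g (p1 u) (p1 v) + g (p2 u) (p2 v))
    -- Levi-Civita connection of g_{β,ε}, via the Koszul formula
    (nablaβε : L → L → L)
    (hKoszulβε : ∀ X Y Z : L, (2 : ℝ) • gβε (nablaβε X Y) Z =
      D X (gβε Y Z) + D Y (gβε X Z) - D Z (gβε X Y)
        + gβε ⁅X, Y⁆ Z - gβε ⁅X, Z⁆ Y - gβε ⁅Y, Z⁆ X) :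
    ∀ X ∈ F, ∀ U₁ ∈ F1, ∀ V₁ ∈ F1,
      g (nablaβε U₁ V₁) X = ((1 : ℝ) / 2) • g ⁅U₁, V₁⁆ X := by

  intro X hX U₁ hU₁ V₁ hV₁
  obtain ⟨hpFF, hpF1, hpF2⟩ := hpF
  obtain ⟨hp1F, hp11, hp12⟩ := hp1
  obtain ⟨hp2F, hp21, hp22⟩ := hp2
  have hgF : ∀ w, g w X = g (pF w) X := by
    intro w
    conv_lhs => rw [← hdecomp w]
    have h1 : g (p1 w) X = 0 := by rw [hgsymm]; exact horthF1 X hX _ (hrange w).2.1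
    have h2 : g (p2 w) X = 0 := by rw [hgsymm]; exact horthF2 X hX _ (hrange w).2.2
    simp [h1, h2]
  have hg1 : ∀ w, ∀ V ∈ F1, g w V = g (p1 w) V := by
    intro w V hV
    conv_lhs => rw [← hdecomp w]
    have h1 : g (pF w) V = 0 := horthF1 _ (hrange w).1 _ hV
    have h2 : g (p2 w) V = 0 := by rw [hgsymm]; exact horth12 V hV _ (hrange w).2.2
    simp [h1, h2]
  have e1 : gβε V₁ X = 0 := by
    rw [hgβε]; simp [hpF1 V₁ hV₁, hp1F X hX, hp21 V₁ hV₁]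
  have e2 : gβε U₁ X = 0 := by
    rw [hgβε]; simp [hpF1 U₁ hU₁, hp1F X hX, hp21 U₁ hU₁]
  have e3 : gβε U₁ V₁ = ((ε ^ 2)⁻¹) • g U₁ V₁ := by
    rw [hgβε]
    simp [hpF1 U₁ hU₁, hp11 U₁ hU₁, hp11 V₁ hV₁, hp21 U₁ hU₁, hp21 V₁ hV₁]
  have e4 : gβε ⁅U₁, V₁⁆ X = (β ^ 2) • g ⁅U₁, V₁⁆ X := by
    rw [hgβε]
    simp [hpFF X hX, hp1F X hX, hp2F X hX]
    rw [← hgF]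
  have e5 : gβε ⁅U₁, X⁆ V₁ = ((ε ^ 2)⁻¹) • g ⁅U₁, X⁆ V₁ := by
    rw [hgβε]
    simp [hpF1 V₁ hV₁, hp11 V₁ hV₁, hp21 V₁ hV₁]
    rw [← hg1 _ V₁ hV₁]
  have e6 : gβε ⁅V₁, X⁆ U₁ = ((ε ^ 2)⁻¹) • g ⁅V₁, X⁆ U₁ := by
    rw [hgβε]
    simp [hpF1 U₁ hU₁, hp11 U₁ hU₁, hp21 U₁ hU₁]
    rw [← hg1 _ U₁ hU₁]
  have e7 : gβε (nablaβε U₁ V₁) X = (β ^ 2) • g (nablaβε U₁ V₁) X := by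
    rw [hgβε]
    simp [hpFF X hX, hp1F X hX, hp2F X hX]
    rw [← hgF]
  have hK := hKoszulβε U₁ V₁ X
  rw [e1, e2, e3, e4, e5, e6, e7, map_zero, map_zero,
    LinearMap.map_smul, hAI1 X hX U₁ hU₁ V₁ hV₁] at hK
  have hl1 : ⁅U₁, X⁆ = -⁅X, U₁⁆ := by rw [← lie_skew X U₁, neg_neg]
  have hl2 : ⁅V₁, X⁆ = -⁅X, V₁⁆ := by rw [← lie_skew X V₁, neg_neg]
  have skew1 : g ⁅U₁, X⁆ V₁ = - g ⁅X, U₁⁆ V₁ := by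
    rw [hl1, map_neg, LinearMap.neg_apply]
  have skew2 : g ⁅V₁, X⁆ U₁ = - g U₁ ⁅X, V₁⁆ := by
    rw [hl2, map_neg, LinearMap.neg_apply, hgsymm]
  rw [skew1, skew2] at hK
  have key : ((2 : ℝ) * β ^ 2) • g (nablaβε U₁ V₁) X = (β ^ 2) • g ⁅U₁, V₁⁆ X := by
    rw [mul_smul]
    rw [hK]
    module
  have hβ2 : (β ^ 2 : ℝ) ≠ 0 := by positivity
  have h2β : (2 * β ^ 2 : ℝ) ≠ 0 := by positivity
  have hmain : g (nablaβε U₁ V₁) X = ((2 * β ^ 2)⁻¹ * β ^ 2) • g ⁅U₁, V₁⁆ X := by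
    rw [← smul_smul, ← key, smul_smul, inv_mul_cancel₀ h2β, one_smul]
  rw [hmain]
  congr 1
  field_simp
end

section
/- Let (M,g) be a Riemannian manifold with orthogonal splitting TM = F ⊕ F₁ ⊕ F₂ satisfying the Connes almost isometric conditions, with F integrable and F₂ integrable. Then for any X ∈ Γ(F) and U₂, V₂ ∈ Γ(F₂): ⟨[U₂,V₂], X⟩ = 0 and ⟨∇_{U₂}V₂, X⟩ = 0, where ∇ is the Levi-Civita connection of g. -/
/-- In the Connes almost-isometric setting with `F` and `F₂` integrable (Condition (C)),
for `X ∈ Γ(F)` and `U₂, V₂ ∈ Γ(F₂)` one has `⟨[U₂,V₂], X⟩ = 0` and `⟨∇_{U₂}V₂, X⟩ = 0`,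
where `∇` is the Levi-Civita connection of `g` (characterized by the Koszul formula).
We model `Γ(TM)` as a real Lie algebra `L`, functions as `C`, the metric as a symmetric
bilinear map `g`, and directional derivatives as `D`. -/
theorem condition_C_bracket_and_connection_orthogonal_to_F
    {L C : Type*} [LieRing L] [LieAlgebra ℝ L] [AddCommGroup C] [Module ℝ C]
    (g : L →ₗ[ℝ] L →ₗ[ℝ] C) (hgsymm : ∀ X Y, g X Y = g Y X)
    (D : L → C →ₗ[ℝ] C)
    (nabla : L → L → L)
    (hKoszul : ∀ X Y Z : L, (2 : ℝ) • g (nabla X Y) Z =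
      D X (g Y Z) + D Y (g X Z) - D Z (g X Y)
        + g ⁅X, Y⁆ Z - g ⁅X, Z⁆ Y - g ⁅Y, Z⁆ X)
    (F F1 F2 : Submodule ℝ L)
    (hsum : F ⊔ F1 ⊔ F2 = ⊤)
    (hFint : ∀ X ∈ F, ∀ Y ∈ F, ⁅X, Y⁆ ∈ F)
    (hF2int : ∀ U ∈ F2, ∀ V ∈ F2, ⁅U, V⁆ ∈ F2)
    (horthF1 : ∀ X ∈ F, ∀ U ∈ F1, g X U = 0)
    (horthF2 : ∀ X ∈ F, ∀ U ∈ F2, g X U = 0)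
    (horth12 : ∀ U ∈ F1, ∀ V ∈ F2, g U V = 0)
    (hAI1 : ∀ X ∈ F, ∀ U ∈ F1, ∀ V ∈ F1,
      D X (g U V) = g ⁅X, U⁆ V + g U ⁅X, V⁆)
    (hAI2 : ∀ X ∈ F, ∀ U ∈ F2, ∀ V ∈ F2,
      D X (g U V) = g ⁅X, U⁆ V + g U ⁅X, V⁆)
    (hAI12 : ∀ X ∈ F, ∀ U₂ ∈ F2, ∀ U₁ ∈ F1, g ⁅X, U₂⁆ U₁ = 0) :
    ∀ X ∈ F, ∀ U₂ ∈ F2, ∀ V₂ ∈ F2,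
      g ⁅U₂, V₂⁆ X = 0 ∧ g (nabla U₂ V₂) X = 0 := by
  intro X hX U₂ hU₂ V₂ hV₂
  have hb : g ⁅U₂, V₂⁆ X = 0 := by
    rw [hgsymm]; exact horthF2 X hX _ (hF2int U₂ hU₂ V₂ hV₂)
  refine ⟨hb, ?_⟩
  have h2 := hKoszul U₂ V₂ X
  have h1 : g V₂ X = 0 := by rw [hgsymm]; exact horthF2 X hX V₂ hV₂
  have h1' : g U₂ X = 0 := by rw [hgsymm]; exact horthF2 X hX U₂ hU₂
  have hD := hAI2 X hX U₂ hU₂ V₂ hV₂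
  have e1 : ⁅U₂, X⁆ = -⁅X, U₂⁆ := (lie_skew U₂ X).symm
  have e2 : ⁅V₂, X⁆ = -⁅X, V₂⁆ := (lie_skew V₂ X).symm
  have hbr1 : g ⁅U₂, X⁆ V₂ = - g ⁅X, U₂⁆ V₂ := by
    rw [e1, map_neg, LinearMap.neg_apply]
  have hbr2 : g ⁅V₂, X⁆ U₂ = - g U₂ ⁅X, V₂⁆ := by
    rw [e2, map_neg, LinearMap.neg_apply, hgsymm]
  rw [h1, h1', hb, hD, hbr1, hbr2] at h2
  simp only [map_zero, LinearMap.zero_apply] at h2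
  have hz : (2 : ℝ) • g (nabla U₂ V₂) X = 0 := by rw [h2]; abel
  have := smul_eq_zero.mp hz
  simpa using this
end

section
/- Let (M,g) be a Riemannian manifold with orthogonal splitting TM = F ⊕ F₁ ⊕ F₂ satisfying the Connes almost isometric conditions, with F integrable. For β, ε > 0 let g_{β,ε} = β²g|_F ⊕ ε^{-2}g|_{F₁} ⊕ g|_{F₂} with Levi-Civita connection ∇^{β,ε}. Then for X ∈ Γ(F), U₁ ∈ Γ(F₁), U₂ ∈ Γ(F₂): ⟨∇^{β,ε}_{U₁}X, U₂⟩ = (1/2)⟨[U₁,X],U₂⟩ - (β²/2)⟨[U₁,U₂],X⟩ and ⟨∇^{β,ε}_{U₂}X, U₁⟩ = (ε²/2)⟨[U₁,X],U₂⟩ + (β²ε²/2)⟨[U₁,U₂],X⟩, where all inner products on the right are with respect to g. -/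
/-- In the Connes almost-isometric setting, for the rescaled metric
`g_{β,ε} = β²g|_F ⊕ ε⁻²g|_{F₁} ⊕ g|_{F₂}` with Levi-Civita connection `∇^{β,ε}`
(characterized by the Koszul formula for `g_{β,ε}`), one has for `X ∈ Γ(F)`,
`U₁ ∈ Γ(F₁)`, `U₂ ∈ Γ(F₂)`:
`⟨∇^{β,ε}_{U₁}X, U₂⟩ = (1/2)⟨[U₁,X],U₂⟩ - (β²/2)⟨[U₁,U₂],X⟩` and
`⟨∇^{β,ε}_{U₂}X, U₁⟩ = (ε²/2)⟨[U₁,X],U₂⟩ + (β²ε²/2)⟨[U₁,U₂],X⟩`, where all inner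
products on the right are with respect to `g`.  We model `Γ(TM)` as a real Lie algebra
`L`, functions as `C`, the metric as a symmetric bilinear map `g`, directional
derivatives as `D`, and `pF, p1, p2` are the projections of the splitting. -/
theorem rescaled_connection_mixed_components
    {L C : Type*} [LieRing L] [LieAlgebra ℝ L] [AddCommGroup C] [Module ℝ C]
    (g : L →ₗ[ℝ] L →ₗ[ℝ] C) (hgsymm : ∀ X Y, g X Y = g Y X)
    (D : L → C →ₗ[ℝ] C)
    (F F1 F2 : Submodule ℝ L)
    (hsum : F ⊔ F1 ⊔ F2 = ⊤)
    (hFint : ∀ X ∈ F, ∀ Y ∈ F, ⁅X, Y⁆ ∈ F)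
    (horthF1 : ∀ X ∈ F, ∀ U ∈ F1, g X U = 0)
    (horthF2 : ∀ X ∈ F, ∀ U ∈ F2, g X U = 0)
    (horth12 : ∀ U ∈ F1, ∀ V ∈ F2, g U V = 0)
    (hAI1 : ∀ X ∈ F, ∀ U ∈ F1, ∀ V ∈ F1,
      D X (g U V) = g ⁅X, U⁆ V + g U ⁅X, V⁆)
    (hAI2 : ∀ X ∈ F, ∀ U ∈ F2, ∀ V ∈ F2,
      D X (g U V) = g ⁅X, U⁆ V + g U ⁅X, V⁆)
    (hAI12 : ∀ X ∈ F, ∀ U₂ ∈ F2, ∀ U₁ ∈ F1, g ⁅X, U₂⁆ U₁ = 0)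
    -- the three projections associated to the splitting `TM = F ⊕ F₁ ⊕ F₂`
    (pF p1 p2 : L →ₗ[ℝ] L)
    (hdecomp : ∀ v : L, pF v + p1 v + p2 v = v)
    (hrange : ∀ v : L, pF v ∈ F ∧ p1 v ∈ F1 ∧ p2 v ∈ F2)
    (hpF : (∀ x ∈ F, pF x = x) ∧ (∀ x ∈ F1, pF x = 0) ∧ (∀ x ∈ F2, pF x = 0))
    (hp1 : (∀ x ∈ F, p1 x = 0) ∧ (∀ x ∈ F1, p1 x = x) ∧ (∀ x ∈ F2, p1 x = 0))
    (hp2 : (∀ x ∈ F, p2 x = 0) ∧ (∀ x ∈ F1, p2 x = 0) ∧ (∀ x ∈ F2, p2 x = x))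
    (β ε : ℝ) (hβ : 0 < β) (hε : 0 < ε)
    -- the rescaled metric g_{β,ε}
    (gβε : L → L → C)
    (hgβε : ∀ u v : L, gβε u v =
      (β ^ 2) • g (pF u) (pF v) + ((ε ^ 2)⁻¹) • g (p1 u) (p1 v) + g (p2 u) (p2 v))
    -- Levi-Civita connection of g_{β,ε}, via the Koszul formula
    (nablaβε : L → L → L)
    (hKoszulβε : ∀ X Y Z : L, (2 : ℝ) • gβε (nablaβε X Y) Z =
      D X (gβε Y Z) + D Y (gβε X Z) - D Z (gβε X Y)
        + gβε ⁅X, Y⁆ Z - gβε ⁅X, Z⁆ Y - gβε ⁅Y, Z⁆ X) :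
    ∀ X ∈ F, ∀ U₁ ∈ F1, ∀ U₂ ∈ F2,
      g (nablaβε U₁ X) U₂
          = ((1 : ℝ) / 2) • g ⁅U₁, X⁆ U₂ - (β ^ 2 / 2) • g ⁅U₁, U₂⁆ X ∧
      g (nablaβε U₂ X) U₁
          = (ε ^ 2 / 2) • g ⁅U₁, X⁆ U₂ + (β ^ 2 * ε ^ 2 / 2) • g ⁅U₁, U₂⁆ X := by

  intro X hX U₁ hU1 U₂ hU2
  obtain ⟨hpFF, hpF1, hpF2⟩ := hpF
  obtain ⟨hp1F, hp11, hp12⟩ := hp1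
  obtain ⟨hp2F, hp21, hp22⟩ := hp2
  have hdec : ∀ w : L, g w = g (pF w) + g (p1 w) + g (p2 w) := by
    intro w
    rw [← map_add, ← map_add, hdecomp w]
  have hg2 : ∀ w : L, gβε w U₂ = g w U₂ := by
    intro w
    have h1 : g (pF w) U₂ = 0 := horthF2 _ (hrange w).1 _ hU2
    have h2 : g (p1 w) U₂ = 0 := horth12 _ (hrange w).2.1 _ hU2
    rw [hgβε, hpF2 U₂ hU2, hp12 U₂ hU2, hp22 U₂ hU2, hdec w]
    simp [h1, h2]
  have hg1 : ∀ w : L, gβε w U₁ = (ε ^ 2)⁻¹ • g w U₁ := by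
    intro w
    have h1 : g (pF w) U₁ = 0 := horthF1 _ (hrange w).1 _ hU1
    have h2 : g (p2 w) U₁ = 0 := by
      rw [hgsymm]; exact horth12 _ hU1 _ (hrange w).2.2
    rw [hgβε, hpF1 U₁ hU1, hp11 U₁ hU1, hp21 U₁ hU1, hdec w]
    simp [h1, h2]
  have hgF : ∀ w : L, gβε w X = (β ^ 2) • g w X := by
    intro w
    have h1 : g (p1 w) X = 0 := by rw [hgsymm]; exact horthF1 _ hX _ (hrange w).2.1
    have h2 : g (p2 w) X = 0 := by rw [hgsymm]; exact horthF2 _ hX _ (hrange w).2.2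
    rw [hgβε, hpFF X hX, hp1F X hX, hp2F X hX, hdec w]
    simp [h1, h2]
  -- vanishing cross terms
  have hz1 : gβε X U₂ = 0 := by rw [hg2]; exact horthF2 _ hX _ hU2
  have hz2 : gβε U₁ U₂ = 0 := by rw [hg2]; exact horth12 _ hU1 _ hU2
  have hz3 : gβε U₁ X = 0 := by
    rw [hgF, hgsymm, horthF1 _ hX _ hU1, smul_zero]
  have hz4 : gβε U₂ X = 0 := by
    rw [hgF, hgsymm, horthF2 _ hX _ hU2, smul_zero]
  have hz5 : gβε X U₁ = 0 := by
    rw [hg1, horthF1 _ hX _ hU1, smul_zero]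
  have hz6 : gβε U₂ U₁ = 0 := by
    rw [hg1, hgsymm, horth12 _ hU1 _ hU2, smul_zero]
  have hAI : g ⁅X, U₂⁆ U₁ = 0 := hAI12 _ hX _ hU2 _ hU1
  constructor
  · have hK := hKoszulβε U₁ X U₂
    rw [hz1, hz2, hz3, hg2 (nablaβε U₁ X), hg2 ⁅U₁, X⁆, hgF ⁅U₁, U₂⁆,
      hg1 ⁅X, U₂⁆, hAI] at hK
    simp only [map_zero, smul_zero] at hK
    have : g (nablaβε U₁ X) U₂ = (2 : ℝ)⁻¹ • ((2 : ℝ) • g (nablaβε U₁ X) U₂) := by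
      rw [smul_smul]; norm_num
    rw [this, hK]
    match_scalars <;> ring
  · have hK := hKoszulβε U₂ X U₁
    rw [hz5, hz6, hz4, hg1 (nablaβε U₂ X), hg1 ⁅U₂, X⁆, hgF ⁅U₂, U₁⁆,
      hg2 ⁅X, U₁⁆] at hK
    have e1 : g ⁅U₂, X⁆ U₁ = 0 := by
      rw [← lie_skew, map_neg, LinearMap.neg_apply, hAI, neg_zero]
    have e2 : g ⁅U₂, U₁⁆ X = -g ⁅U₁, U₂⁆ X := by
      rw [← lie_skew U₁ U₂, map_neg, LinearMap.neg_apply, neg_neg]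
    have e3 : g ⁅X, U₁⁆ U₂ = -g ⁅U₁, X⁆ U₂ := by
      rw [← lie_skew U₁ X, map_neg, LinearMap.neg_apply, neg_neg]
    rw [e1, e2, e3] at hK
    simp only [map_zero, smul_zero, smul_neg] at hK
    have hε2 : (ε ^ 2) ≠ 0 := by positivity
    have : g (nablaβε U₂ X) U₁
        = (ε ^ 2 / 2) • ((2 : ℝ) • (ε ^ 2)⁻¹ • g (nablaβε U₂ X) U₁) := by
      rw [smul_smul, smul_smul]
      rw [show ε ^ 2 / 2 * 2 * (ε ^ 2)⁻¹ = 1 by field_simp]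
      rw [one_smul]
    rw [this, hK]
    match_scalars <;> field_simp <;> ring
end
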